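/- arXiv:1510.02521 — 9 statements merged into one kernel-verified Lean document; each statement's English description precedes it below -/
import Mathlib

section
/- If the cells of a Latin square L of order n admit a (k₁, k₂, …, k_d)-partition, i.e. a partition into sets K₁, …, K_d where each Kᵢ is a kᵢ-plex (each kᵢ ≥ 1), then χ(L) ≤ 3n − 2d. -/
/-!
Each `kᵢ`-plex `Kᵢ` meets a row, a column and a symbol class in `kᵢ` cells, so a cell of `Kᵢ`
has at most `3(kᵢ - 1)` neighbours inside `Kᵢ`, and `Kᵢ` can be coloured greedily with
`3kᵢ - 2` colours. Using disjoint palettes for the different plexes colours the whole square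
with `∑ᵢ (3kᵢ - 2) = 3n - 2d` colours, since counting cells gives `∑ᵢ kᵢ = n`.
-/

/-- The Latin square graph of `L : Fin n → Fin n → Fin n`: vertices are cells, and two
distinct cells are adjacent iff they share a row, a column, or a symbol. -/
def latinGraph (n : ℕ) (L : Fin n → Fin n → Fin n) : SimpleGraph (Fin n × Fin n) where
  Adj x y := x ≠ y ∧ (x.1 = y.1 ∨ x.2 = y.2 ∨ L x.1 x.2 = L y.1 y.2)
  symm := by
    constructor
    rintro x y ⟨hne, h⟩
    refine ⟨hne.symm, ?_⟩
    rcases h with h | h | h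
    · exact Or.inl h.symm
    · exact Or.inr (Or.inl h.symm)
    · exact Or.inr (Or.inr h.symm)
  loopless := by constructor; rintro x ⟨hne, -⟩; exact hne rfl

open Finset

namespace SimpleGraph

variable {V : Type*} (G : SimpleGraph V)

def IsColoringOn (s : Finset V) (m : ℕ) (f : V → ℕ) : Prop :=
  (∀ v ∈ s, f v < m) ∧ ∀ v ∈ s, ∀ w ∈ s, G.Adj v w → f v ≠ f w

variable {G}

theorem IsColoringOn.update_insert [DecidableEq V] [DecidableRel G.Adj] {s : Finset V}
    {m : ℕ} {f : V → ℕ} (hf : G.IsColoringOn s m f) {a : V} (ha : a ∉ s) {c : ℕ}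
    (hcm : c < m) (hc : c ∉ {w ∈ s | G.Adj a w}.image f) :
    G.IsColoringOn (insert a s) m (Function.update f a c) := by
  have hne {v} (hv : v ∈ s) : v ≠ a := ne_of_mem_of_not_mem hv ha
  have hnew {w} (hw : w ∈ s) (hadj : G.Adj a w) : c ≠ f w := fun h =>
    hc (mem_image.mpr ⟨w, mem_filter.mpr ⟨hw, hadj⟩, h.symm⟩)
  refine ⟨fun v hv => ?_, fun v hv w hw hadj => ?_⟩
  · rcases mem_insert.mp hv with rfl | hvs
    · simpa using hcm
    · simpa [hne hvs] using hf.1 v hvs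
  rcases mem_insert.mp hv with rfl | hvs <;> rcases mem_insert.mp hw with rfl | hws
  · exact absurd hadj (G.loopless.irrefl _)
  · simpa [hne hws] using hnew hws hadj
  · simpa [hne hvs] using (hnew hvs hadj.symm).symm
  · simpa [hne hvs, hne hws] using hf.2 v hvs w hws hadj

theorem exists_isColoringOn_of_card_adj_lt [DecidableEq V] [DecidableRel G.Adj] {m : ℕ}
    (s : Finset V) (h : ∀ v ∈ s, #{w ∈ s | G.Adj v w} < m) :
    ∃ f, G.IsColoringOn s m f := by
  induction s using Finset.induction_on with
  | empty => exact ⟨fun _ => 0, by simp [IsColoringOn]⟩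
  | @insert a s ha ih =>
    have hmono (v) : #{w ∈ s | G.Adj v w} ≤ #{w ∈ insert a s | G.Adj v w} :=
      card_le_card (filter_subset_filter _ (subset_insert a s))
    obtain ⟨f, hf⟩ := ih fun v hv => (hmono v).trans_lt (h v (mem_insert_of_mem hv))
    have hused : {w ∈ s | G.Adj a w}.image f ⊆ Finset.range m := fun x hx => by
      obtain ⟨w, hw, rfl⟩ := mem_image.mp hx
      exact Finset.mem_range.mpr (hf.1 w (mem_filter.mp hw).1)
    obtain ⟨c, hc⟩ : (Finset.range m \ {w ∈ s | G.Adj a w}.image f).Nonempty := by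
      rw [← card_pos, card_sdiff_of_subset hused, card_range]
      have := ((card_image_le (f := f)).trans (hmono a)).trans_lt (h a (mem_insert_self a s))
      omega
    rw [mem_sdiff, mem_range] at hc
    exact ⟨_, hf.update_insert ha hc.1 hc.2⟩

theorem colorable_sum_of_isColoringOn {ι : Type*} [Fintype ι] (K : ι → Finset V)
    (hcover : ∀ v, ∃ i, v ∈ K i) (c : ι → ℕ) (h : ∀ i, ∃ f, G.IsColoringOn (K i) (c i) f) :
    G.Colorable (∑ i, c i) := by
  choose part hpart using hcover
  choose f hf using h
  let color (v : V) : Σ i, Fin (c i) := ⟨part v, f (part v) v, (hf _).1 v (hpart v)⟩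
  have hcolor : G.Colorable (Fintype.card (Σ i, Fin (c i))) := by
    refine (Coloring.mk color fun {v w} hadj heq => ?_).colorable
    obtain ⟨hpw, hfw⟩ := Sigma.mk.inj_iff.mp heq
    have hw : w ∈ K (part v) := by rw [hpw]; exact hpart w
    exact (hf _).2 v (hpart v) w hw hadj (by simpa [hpw] using Fin.val_eq_val_of_heq hfw)
  simpa using hcolor

end SimpleGraph

instance (n : ℕ) (L : Fin n → Fin n → Fin n) : DecidableRel (latinGraph n L).Adj :=
  fun x y => inferInstanceAs (Decidable (x ≠ y ∧ (x.1 = y.1 ∨ x.2 = y.2 ∨ L x.1 x.2 = L y.1 y.2)))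

theorem card_latinGraph_adj_le {n : ℕ} (L : Fin n → Fin n → Fin n) {K : Finset (Fin n × Fin n)}
    {k : ℕ} (hr : ∀ r, #{q ∈ K | q.1 = r} ≤ k) (hc : ∀ c, #{q ∈ K | q.2 = c} ≤ k)
    (hs : ∀ s, #{q ∈ K | L q.1 q.2 = s} ≤ k) {p : Fin n × Fin n} (hp : p ∈ K) :
    #{q ∈ K | (latinGraph n L).Adj p q} ≤ 3 * (k - 1) := by
  have herase {P : Fin n × Fin n → Prop} [DecidablePred P] (hPp : P p)
      (hPk : #{q ∈ K | P q} ≤ k) : #({q ∈ K | P q}.erase p) ≤ k - 1 := by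
    rw [card_erase_of_mem (mem_filter.mpr ⟨hp, hPp⟩)]
    exact Nat.sub_le_sub_right hPk 1
  calc #{q ∈ K | (latinGraph n L).Adj p q}
      ≤ #({q ∈ K | q.1 = p.1}.erase p ∪ {q ∈ K | q.2 = p.2}.erase p ∪
          {q ∈ K | L q.1 q.2 = L p.1 p.2}.erase p) := by
        refine card_le_card fun q hq => ?_
        obtain ⟨hqK, hpq, hshare⟩ := mem_filter.mp hq
        simp only [mem_union, mem_erase, mem_filter]
        rcases hshare with h | h | h <;> simp [hpq.symm, hqK, h]
    _ ≤ #({q ∈ K | q.1 = p.1}.erase p) + #({q ∈ K | q.2 = p.2}.erase p) +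
          #({q ∈ K | L q.1 q.2 = L p.1 p.2}.erase p) :=
        (card_union_le _ _).trans (Nat.add_le_add_right (card_union_le _ _) _)
    _ ≤ (k - 1) + (k - 1) + (k - 1) :=
        add_le_add (add_le_add (herase rfl (hr _)) (herase rfl (hc _))) (herase rfl (hs _))
    _ = 3 * (k - 1) := by ring

theorem Finset.sum_card_eq_card_of_partition {α ι : Type*} [Fintype α] [DecidableEq α]
    [Fintype ι] (K : ι → Finset α) (hdisj : ∀ i j, i ≠ j → Disjoint (K i) (K j))
    (hcover : ∀ a, ∃ i, a ∈ K i) : ∑ i, #(K i) = Fintype.card α := by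
  rw [← card_biUnion fun i _ j _ hij => hdisj i j hij, ← card_univ]
  congr
  ext a
  simpa using hcover a

theorem stmt_4_general (n d : ℕ) (L : Fin n → Fin n → Fin n)
    (k : Fin d → ℕ) (hk : ∀ i, 1 ≤ k i)
    (K : Fin d → Finset (Fin n × Fin n))
    (hcard : ∀ i, (K i).card = k i * n)
    (hKr : ∀ i, ∀ r : Fin n, ((K i).filter fun p => p.1 = r).card = k i)
    (hKc : ∀ i, ∀ c : Fin n, ((K i).filter fun p => p.2 = c).card = k i)
    (hKs : ∀ i, ∀ s : Fin n, ((K i).filter fun p => L p.1 p.2 = s).card = k i)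
    (hdisj : ∀ i j, i ≠ j → Disjoint (K i) (K j))
    (hcover : ∀ p : Fin n × Fin n, ∃ i, p ∈ K i) :
    (latinGraph n L).chromaticNumber ≤ ((3 * n - 2 * d : ℕ) : ℕ∞) := by
  obtain rfl | hn := n.eq_zero_or_pos
  · exact (SimpleGraph.Colorable.of_isEmpty _).chromaticNumber_le
  have hksum : ∑ i, k i = n := by
    refine Nat.eq_of_mul_eq_mul_right hn ?_
    rw [sum_mul, ← sum_congr rfl fun i _ => hcard i,
      sum_card_eq_card_of_partition K hdisj hcover]
    simp
  have hcolors : ∑ i, (3 * k i - 2) = 3 * n - 2 * d := by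
    rw [sum_tsub_distrib _ fun i _ => by have := hk i; omega, ← mul_sum, hksum]
    simp [mul_comm]
  rw [← hcolors]
  refine (SimpleGraph.colorable_sum_of_isColoringOn K hcover _ fun i =>
    SimpleGraph.exists_isColoringOn_of_card_adj_lt _ fun p hp => ?_).chromaticNumber_le
  have hdeg := card_latinGraph_adj_le L (fun r => (hKr i r).le) (fun c => (hKc i c).le)
    (fun s => (hKs i s).le) hp
  have hki := hk i
  omega

/-- If the cells of a Latin square `L` of order `n` admit a `(k₁, …, k_d)`-partition into
plexes, then `χ(L) ≤ 3n - 2d`. -/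
theorem stmt_4 (n d : ℕ) (L : Fin n → Fin n → Fin n)
    (hrow : ∀ r, Function.Bijective (L r))
    (hcol : ∀ c, Function.Bijective fun r => L r c)
    (k : Fin d → ℕ) (hk : ∀ i, 1 ≤ k i)
    (K : Fin d → Finset (Fin n × Fin n))
    (hcard : ∀ i, (K i).card = k i * n)
    (hKr : ∀ i, ∀ r : Fin n, ((K i).filter fun p => p.1 = r).card = k i)
    (hKc : ∀ i, ∀ c : Fin n, ((K i).filter fun p => p.2 = c).card = k i)
    (hKs : ∀ i, ∀ s : Fin n, ((K i).filter fun p => L p.1 p.2 = s).card = k i)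
    (hdisj : ∀ i j, i ≠ j → Disjoint (K i) (K j))
    (hcover : ∀ p : Fin n × Fin n, ∃ i, p ∈ K i) :
    (latinGraph n L).chromaticNumber ≤ ((3 * n - 2 * d : ℕ) : ℕ∞) :=
  stmt_4_general n d L k hk K hcard hKr hKc hKs hdisj hcover
end

section
/- If a Latin square L of order n contains t pairwise disjoint transversals with t ≤ n − 2, then χ(L) ≤ 3n − 2t − 2. -/
open Finset SimpleGraph

namespace SimpleGraph

variable {V : Type*} {G : SimpleGraph V}

theorem colorable_of_forall_degree_lt [Fintype V] [DecidableRel G.Adj] {k : ℕ}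
    (h : ∀ v, G.degree v < k) : G.Colorable k := by
  classical
  suffices ∀ s : Finset V, ∃ f : V → Fin k, ∀ v ∈ s, ∀ w ∈ s, G.Adj v w → f v ≠ f w by
    obtain ⟨f, hf⟩ := this univ
    exact ⟨Coloring.mk f fun hvw => hf _ (mem_univ _) _ (mem_univ _) hvw⟩
  intro s
  induction s using Finset.induction_on with
  | empty => exact ⟨fun v => ⟨0, (Nat.zero_le _).trans_lt (h v)⟩, by simp⟩
  | insert a s ha ih =>
    obtain ⟨f, hf⟩ := ih
    have hforbidden : #((G.neighborFinset a ∩ s).image f) < #(univ : Finset (Fin k)) := by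
      grw [card_image_le, card_le_card inter_subset_left, card_neighborFinset_eq_degree,
        card_univ, Fintype.card_fin]
      exact h a
    obtain ⟨c, -, hc⟩ := exists_mem_notMem_of_card_lt_card hforbidden
    have hc' : ∀ w ∈ s, G.Adj a w → c ≠ f w := fun w hw haw hcw =>
      hc (mem_image.2 ⟨w, mem_inter.2 ⟨(mem_neighborFinset _ _ _).2 haw, hw⟩, hcw.symm⟩)
    refine ⟨Function.update f a c, fun v hv w hw hvw => ?_⟩
    rcases mem_insert.1 hv with rfl | hvs <;> rcases mem_insert.1 hw with rfl | hws
    · exact absurd hvw (G.loopless.irrefl _)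
    · rw [Function.update_self, Function.update_of_ne (ne_of_mem_of_not_mem hws ha)]
      exact hc' w hws hvw
    · rw [Function.update_self, Function.update_of_ne (ne_of_mem_of_not_mem hvs ha)]
      exact (hc' v hvs hvw.symm).symm
    · rw [Function.update_of_ne (ne_of_mem_of_not_mem hvs ha),
        Function.update_of_ne (ne_of_mem_of_not_mem hws ha)]
      exact hf v hvs w hws hvw

theorem Colorable.of_induce_of_induce_compl {s : Set V} {a b : ℕ}
    (hs : (G.induce s).Colorable a) (hsc : (G.induce sᶜ).Colorable b) : G.Colorable (a + b) := by
  classical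
  obtain ⟨C₁⟩ := hs
  obtain ⟨C₂⟩ := hsc
  let C : G.Coloring (Fin a ⊕ Fin b) := Coloring.mk
    (fun v => if h : v ∈ s then .inl (C₁ ⟨v, h⟩) else .inr (C₂ ⟨v, h⟩))
    fun {v w} hvw => by
      by_cases hv : v ∈ s <;> by_cases hw : w ∈ s <;> simp only [hv, hw, dite_true, dite_false,
        ne_eq, Sum.inl.injEq, Sum.inr.injEq, reduceCtorEq, not_false_eq_true]
      · exact C₁.valid (v := ⟨v, hv⟩) (w := ⟨w, hw⟩) hvw
      · exact C₂.valid (v := ⟨v, hv⟩) (w := ⟨w, hw⟩) hvw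
  simpa using C.colorable

theorem colorable_induce_iUnion_of_isIndepSet {ι : Type*} [Fintype ι] {T : ι → Set V}
    (hT : ∀ i, G.IsIndepSet (T i)) : (G.induce (⋃ i, T i)).Colorable (Fintype.card ι) := by
  choose c hc using fun v : ↥(⋃ i, T i) => Set.mem_iUnion.1 v.2
  refine (Coloring.mk c fun {v w} hvw hcvw => ?_).colorable
  exact hT (c w) (hcvw ▸ hc v) (hc w) (fun h => hvw.ne (Subtype.ext h)) hvw

theorem degree_induce_compl [Fintype V] [DecidableEq V] [DecidableRel G.Adj] (s : Finset V)
    (v : ↥(s : Set V)ᶜ) : (G.induce (s : Set V)ᶜ).degree v = #(G.neighborFinset v \ s) := by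
  rw [← card_neighborFinset_eq_degree, ← card_map, map_neighborFinset_induce,
    Set.toFinset_compl, toFinset_coe, sdiff_eq_inter_compl]

end SimpleGraph

theorem Finset.exists_mem_eq_of_injOn {α β : Type*} [Fintype β] [DecidableEq β] {T : Finset α}
    {g : α → β} (hcard : #T = Fintype.card β) (hg : Set.InjOn g T) (y : β) :
    ∃ p ∈ T, g p = y := by
  have himage : T.image g = univ := eq_univ_of_card _ (by rw [card_image_of_injOn hg, hcard])
  exact mem_image.1 (himage ▸ mem_univ y)

theorem Finset.card_filter_ne_and_eq_le {α β γ : Type*} [Fintype α] [DecidableEq α]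
    [Fintype β] [DecidableEq β] [DecidableEq γ] {g : α → γ} {h : α → β}
    (hgh : Function.Injective fun p => (g p, h p)) (a : α) :
    #{p | p ≠ a ∧ g p = g a} ≤ Fintype.card β - 1 := by
  calc #{p | p ≠ a ∧ g p = g a} ≤ #(univ.erase (h a)) := by
        refine card_le_card_of_injOn h (fun p hp => ?_) fun p hp q hq hpq => ?_
        · obtain ⟨hpa, hgp⟩ := (mem_filter.1 hp).2
          exact mem_erase.2 ⟨fun hhp => hpa (hgh (Prod.ext hgp hhp)), mem_univ _⟩
        · exact hgh (Prod.ext ((mem_filter.1 hp).2.2.trans (mem_filter.1 hq).2.2.symm) hpq)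
    _ = Fintype.card β - 1 := by simp

instance latinGraph.instDecidableRelAdj (n : ℕ) (L : Fin n → Fin n → Fin n) : DecidableRel (latinGraph n L).Adj :=
  fun x y => inferInstanceAs (Decidable (x ≠ y ∧ _))

section LatinSquare

variable {n : ℕ} {L : Fin n → Fin n → Fin n}

theorem latinGraph_degree_le (hrow : ∀ r, Function.Injective (L r)) (a : Fin n × Fin n) :
    (latinGraph n L).degree a ≤ 3 * (n - 1) := by
  have hsub : (latinGraph n L).neighborFinset a ⊆ ({p | p ≠ a ∧ p.1 = a.1} : Finset _) ∪
      ({p | p ≠ a ∧ p.2 = a.2} : Finset _) ∪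
      ({p | p ≠ a ∧ L p.1 p.2 = L a.1 a.2} : Finset _) := by
    intro p hp
    obtain ⟨hne, hp⟩ := (latinGraph n L).mem_neighborFinset a p |>.1 hp
    simp only [mem_union, mem_filter, mem_univ, true_and]
    grind
  have hrowcount := card_filter_ne_and_eq_le (g := Prod.fst) (h := Prod.snd)
    (fun p q h => by simpa using h) a
  have hcolcount := card_filter_ne_and_eq_le (g := Prod.snd) (h := Prod.fst)
    (fun p q h => by simp_all [Prod.ext_iff]) a
  have hsymcount := card_filter_ne_and_eq_le (g := fun p => L p.1 p.2) (h := Prod.fst)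
    (fun p q h => by
      simp only [Prod.mk.injEq] at h
      exact Prod.ext h.2 (hrow q.1 (h.2 ▸ h.1))) a
  rw [Fintype.card_fin] at hrowcount hcolcount hsymcount
  rw [← card_neighborFinset_eq_degree]
  grw [card_le_card hsub, card_union_le, card_union_le]
  omega

theorem injOn_of_isIndepSet_latinGraph {T : Set (Fin n × Fin n)}
    (hT : (latinGraph n L).IsIndepSet T) {g : Fin n × Fin n → Fin n}
    (hg : ∀ p q, g p = g q → p.1 = q.1 ∨ p.2 = q.2 ∨ L p.1 p.2 = L q.1 q.2) : Set.InjOn g T :=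
  fun p hp q hq hpq => by_contra fun hne => hT hp hq hne ⟨hne, hg p q hpq⟩

theorem three_le_card_neighborFinset_inter (hrow : ∀ r, Function.Injective (L r))
    (hcol : ∀ c, Function.Injective fun r => L r c) {T : Finset (Fin n × Fin n)}
    (hT : (latinGraph n L).IsIndepSet T) (hcard : #T = n) {a : Fin n × Fin n} (ha : a ∉ T) :
    3 ≤ #((latinGraph n L).neighborFinset a ∩ T) := by
  replace hcard : #T = Fintype.card (Fin n) := by rw [hcard, Fintype.card_fin]
  obtain ⟨pr, hpr, hpr1⟩ := exists_mem_eq_of_injOn hcard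
    (injOn_of_isIndepSet_latinGraph hT (g := Prod.fst) fun _ _ h => Or.inl h) a.1
  obtain ⟨pc, hpc, hpc2⟩ := exists_mem_eq_of_injOn hcard
    (injOn_of_isIndepSet_latinGraph hT (g := Prod.snd) fun _ _ h => Or.inr (Or.inl h)) a.2
  obtain ⟨ps, hps, hps3⟩ := exists_mem_eq_of_injOn hcard
    (injOn_of_isIndepSet_latinGraph hT (g := fun p => L p.1 p.2) fun _ _ h => Or.inr (Or.inr h))
    (L a.1 a.2)
  have hne : ∀ p ∈ T, p ≠ a := fun p hp h => ha (h ▸ hp)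
  have hrc : pr ≠ pc := fun h => hne pr hpr (Prod.ext hpr1 (h ▸ hpc2))
  have hrs : pr ≠ ps := fun h => hne pr hpr (Prod.ext hpr1 (hrow a.1 (by rw [← hps3, ← h, hpr1])))
  have hcs : pc ≠ ps := fun h => hne pc hpc (Prod.ext (hcol a.2 (by
    show L pc.1 a.2 = L a.1 a.2
    rw [← hps3, ← h, hpc2])) hpc2)
  have hsub : {pr, pc, ps} ⊆ (latinGraph n L).neighborFinset a ∩ T := by
    simp only [insert_subset_iff, singleton_subset_iff, mem_inter, mem_neighborFinset]
    exact ⟨⟨⟨(hne pr hpr).symm, Or.inl hpr1.symm⟩, hpr⟩,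
      ⟨⟨(hne pc hpc).symm, Or.inr (Or.inl hpc2.symm)⟩, hpc⟩,
      ⟨⟨(hne ps hps).symm, Or.inr (Or.inr hps3.symm)⟩, hps⟩⟩
  exact (card_eq_three.2 ⟨pr, pc, ps, hrc, hrs, hcs, rfl⟩).symm.trans_le (card_le_card hsub)

theorem card_neighborFinset_sdiff_biUnion_le (hrow : ∀ r, Function.Injective (L r))
    (hcol : ∀ c, Function.Injective fun r => L r c) {ι : Type*} [Fintype ι]
    {T : ι → Finset (Fin n × Fin n)} (hT : ∀ i, (latinGraph n L).IsIndepSet (T i))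
    (hcard : ∀ i, #(T i) = n) (hdisj : Pairwise fun i j => Disjoint (T i) (T j)) {a : Fin n × Fin n}
    (ha : a ∉ univ.biUnion T) :
    #((latinGraph n L).neighborFinset a \ univ.biUnion T) ≤ 3 * (n - 1) - 3 * Fintype.card ι := by
  have hmeet : 3 * Fintype.card ι ≤ #((latinGraph n L).neighborFinset a ∩ univ.biUnion T) := by
    rw [inter_biUnion, card_biUnion fun i _ j _ hij =>
      (hdisj hij).mono inter_subset_right inter_subset_right]
    calc 3 * Fintype.card ι = ∑ _i : ι, 3 := by simp [mul_comm]
      _ ≤ _ := sum_le_sum fun i _ => three_le_card_neighborFinset_inter hrow hcol (hT i)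
        (hcard i) fun h => ha (mem_biUnion.2 ⟨i, mem_univ _, h⟩)
  have hsplit := card_sdiff_add_card_inter ((latinGraph n L).neighborFinset a) (univ.biUnion T)
  have hdeg := latinGraph_degree_le hrow a
  rw [← card_neighborFinset_eq_degree] at hdeg
  omega

end LatinSquare

/-- If a Latin square of order `n` contains `t ≤ n - 2` pairwise disjoint transversals,
then `χ(L) ≤ 3n - 2t - 2`. -/
theorem stmt_5 (n t : ℕ) (ht : t ≤ n - 2) (L : Fin n → Fin n → Fin n)
    (hrow : ∀ r, Function.Bijective (L r))
    (hcol : ∀ c, Function.Bijective fun r => L r c)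
    (T : Fin t → Finset (Fin n × Fin n))
    (hindep : ∀ i, ∀ p ∈ T i, ∀ q ∈ T i, ¬ (latinGraph n L).Adj p q)
    (hcard : ∀ i, (T i).card = n)
    (hdisj : ∀ i j, i ≠ j → Disjoint (T i) (T j)) :
    (latinGraph n L).chromaticNumber ≤ ((3 * n - 2 * t - 2 : ℕ) : ℕ∞) := by
  set A : Finset (Fin n × Fin n) := univ.biUnion T
  have hT : ∀ i, (latinGraph n L).IsIndepSet (T i) := fun i p hp q hq _ => hindep i p hp q hq
  have hA : ((latinGraph n L).induce A).Colorable t := by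
    have hAset : (A : Set (Fin n × Fin n)) = ⋃ i, (T i : Set _) := by simp [A]
    rw [hAset]
    simpa using colorable_induce_iUnion_of_isIndepSet hT
  have hAc :
      ((latinGraph n L).induce (A : Set (Fin n × Fin n))ᶜ).Colorable (3 * n - 3 * t - 2) := by
    refine colorable_of_forall_degree_lt fun v => ?_
    have hv : #((latinGraph n L).neighborFinset v \ A) ≤ 3 * (n - 1) - 3 * Fintype.card (Fin t) :=
      card_neighborFinset_sdiff_biUnion_le (fun r => (hrow r).1) (fun c => (hcol c).1)
        hT hcard hdisj v.2
    rw [Fintype.card_fin] at hv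
    rw [degree_induce_compl]
    have hn : 0 < n := v.1.1.pos
    omega
  exact ((hA.of_induce_of_induce_compl hAc).mono (by omega)).chromaticNumber_le
end

section
/- If a Latin square L of order n (with n ≥ 1) contains n − 1 pairwise disjoint transversals, then χ(L) = n. -/
open Finset SimpleGraph Function

section ProdCard

variable {α β γ : Type*} [Fintype α] [Fintype β]

theorem Finset.card_filter_fst_eq [DecidableEq α] (a : α) :
    #{p : α × β | p.1 = a} = Fintype.card β := by
  rw [show ({p : α × β | p.1 = a} : Finset _) = {a} ×ˢ univ by ext ⟨x, y⟩; simp [eq_comm],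
    card_product, card_singleton, one_mul, card_univ]

theorem Finset.card_filter_snd_eq [DecidableEq β] (b : β) :
    #{p : α × β | p.2 = b} = Fintype.card α := by
  rw [show ({p : α × β | p.2 = b} : Finset _) = univ ×ˢ {b} by ext ⟨x, y⟩; simp [eq_comm],
    card_product, card_singleton, mul_one, card_univ]

theorem Finset.card_filter_uncurry_eq_of_bijective [Fintype γ] [DecidableEq γ]
    {L : α → β → γ} (hL : ∀ a, Bijective (L a)) (c : γ) :
    #{p : α × β | L p.1 p.2 = c} = Fintype.card α := by
  let e : α × β ≃ α × γ := (Equiv.refl α).prodShear fun a => Equiv.ofBijective (L a) (hL a)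
  calc #{p : α × β | L p.1 p.2 = c}
      = #{p : α × β | (e p).2 = c} := rfl
    _ = #{p : α × γ | p.2 = c} := card_equiv e (by simp)
    _ = Fintype.card α := card_filter_snd_eq c

end ProdCard

section DisjointFamily

variable {ι α β : Type*} [Fintype ι] [DecidableEq α] {T : ι → Finset α}

theorem Finset.card_sdiff_biUnion_le_one (hT : Pairwise (Disjoint on T)) {S : Finset α}
    (hS : #S ≤ Fintype.card ι + 1) (hmeet : ∀ i, (S ∩ T i).Nonempty) :
    #(S \ univ.biUnion T) ≤ 1 := by
  have hcover : Fintype.card ι ≤ #(S ∩ univ.biUnion T) := by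
    rw [inter_biUnion,
      card_biUnion fun i _ j _ hij => (hT hij).mono inter_subset_right inter_subset_right]
    simpa using sum_le_sum fun i (_ : i ∈ univ) => one_le_card.2 (hmeet i)
  have := card_sdiff_add_card_inter S (univ.biUnion T)
  omega

theorem Finset.eq_of_apply_eq_of_forall_notMem [Fintype α] [Fintype β] [DecidableEq β]
    (hT : Pairwise (Disjoint on T)) {f : α → β} (hf : ∀ i, Set.InjOn f (T i))
    (hcard : ∀ i, #(T i) = Fintype.card β) (hfib : ∀ b, #{a | f a = b} ≤ Fintype.card ι + 1)
    {p q : α} (hp : ∀ i, p ∉ T i) (hq : ∀ i, q ∉ T i) (hpq : f p = f q) : p = q := by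
  have hmeet (i : ι) : (({a | f a = f q} : Finset α) ∩ T i).Nonempty := by
    obtain ⟨a, ha, hfa⟩ := surjOn_of_injOn_of_card_le (t := univ) f
      (fun _ _ => mem_coe.2 (mem_univ _)) (hf i) (by simp [hcard]) (mem_univ (f q))
    exact ⟨a, mem_inter.2 ⟨by simpa using hfa, ha⟩⟩
  exact card_le_one.1 (card_sdiff_biUnion_le_one hT (hfib _) hmeet) p (by simp [hp, hpq]) q
    (by simp [hq])

end DisjointFamily

theorem SimpleGraph.colorable_card_add_one_of_isIndepSet {V ι : Type*} [Fintype ι]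
    (G : SimpleGraph V) (T : ι → Set V) (hT : ∀ i, G.IsIndepSet (T i))
    (hrest : G.IsIndepSet {v | ∀ i, v ∉ T i}) : G.Colorable (Fintype.card ι + 1) := by
  classical
  let C : V → Option ι := fun v => if h : ∃ i, v ∈ T i then some h.choose else none
  refine Fintype.card_option (α := ι) ▸ (Coloring.mk C fun {u v} huv hC => ?_).colorable
  by_cases hu : ∃ i, u ∈ T i <;> by_cases hv : ∃ i, v ∈ T i <;>
    simp only [C, hu, hv, dite_true, dite_false, reduceCtorEq, Option.some_inj] at hC
  · exact hT _ hu.choose_spec (hC ▸ hv.choose_spec) huv.ne huv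
  · exact hrest (not_exists.1 hu) (not_exists.1 hv) huv.ne huv

section LatinSquare

variable {n : ℕ} (L : Fin n → Fin n → Fin n)

theorem latinGraph_isClique_row (r : Fin n) :
    (latinGraph n L).IsClique ({p | p.1 = r} : Finset (Fin n × Fin n)) := by
  intro p hp q hq hpq
  simp only [coe_filter, mem_univ, true_and, Set.mem_ofPred_eq] at hp hq
  exact ⟨hpq, Or.inl (hp.trans hq.symm)⟩

theorem SimpleGraph.IsIndepSet.injOn_of_latinGraph {s : Set (Fin n × Fin n)}
    (hs : (latinGraph n L).IsIndepSet s) {f : Fin n × Fin n → Fin n}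
    (hf : ∀ p q, f p = f q → p.1 = q.1 ∨ p.2 = q.2 ∨ L p.1 p.2 = L q.1 q.2) : s.InjOn f :=
  fun p hp q hq hpq => by_contra fun hne => hs hp hq hne ⟨hne, hf p q hpq⟩

theorem latinGraph_isIndepSet_compl_transversals (hrow : ∀ r, Bijective (L r))
    {ι : Type*} [Fintype ι] (hι : n ≤ Fintype.card ι + 1) (T : ι → Finset (Fin n × Fin n))
    (hT : ∀ i, (latinGraph n L).IsIndepSet (T i)) (hcard : ∀ i, #(T i) = n)
    (hdisj : Pairwise (Disjoint on T)) :
    (latinGraph n L).IsIndepSet {p | ∀ i, p ∉ T i} := by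
  intro p hp q hq hne ⟨_, hline⟩
  have eq_of_line (f : Fin n × Fin n → Fin n)
      (hf : ∀ a b, f a = f b → a.1 = b.1 ∨ a.2 = b.2 ∨ L a.1 a.2 = L b.1 b.2)
      (hfib : ∀ v, #{a | f a = v} = n) (hpq : f p = f q) : p = q :=
    eq_of_apply_eq_of_forall_notMem hdisj (fun i => (hT i).injOn_of_latinGraph L hf)
      (by simpa using hcard) (fun v => (hfib v).trans_le hι) hp hq hpq
  apply hne
  rcases hline with h | h | h
  · exact eq_of_line Prod.fst (fun _ _ => Or.inl)
      (fun v => by simpa using card_filter_fst_eq (β := Fin n) v) h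
  · exact eq_of_line Prod.snd (fun _ _ => Or.inr ∘ Or.inl)
      (fun v => by simpa using card_filter_snd_eq (α := Fin n) v) h
  · exact eq_of_line _ (fun _ _ => Or.inr ∘ Or.inr)
      (by simpa using card_filter_uncurry_eq_of_bijective hrow) h

end LatinSquare

theorem stmt_6_general (n : ℕ) (hn : 1 ≤ n) (L : Fin n → Fin n → Fin n)
    (hrow : ∀ r, Function.Bijective (L r))
    (T : Fin (n - 1) → Finset (Fin n × Fin n))
    (hindep : ∀ i, ∀ p ∈ T i, ∀ q ∈ T i, ¬ (latinGraph n L).Adj p q)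
    (hcard : ∀ i, (T i).card = n)
    (hdisj : ∀ i j, i ≠ j → Disjoint (T i) (T j)) :
    (latinGraph n L).chromaticNumber = (n : ℕ∞) := by
  have hT (i : Fin (n - 1)) : (latinGraph n L).IsIndepSet (T i) :=
    fun p hp q hq _ => hindep i p hp q hq
  have hsucc : Fintype.card (Fin (n - 1)) + 1 = n := by simpa using Nat.sub_add_cancel hn
  apply le_antisymm
  · have hcol := (latinGraph n L).colorable_card_add_one_of_isIndepSet (fun i => T i) hT
      (latinGraph_isIndepSet_compl_transversals L hrow hsucc.ge T hT hcard hdisj)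
    rw [hsucc] at hcol
    exact hcol.chromaticNumber_le
  · simpa [card_filter_fst_eq] using
      (latinGraph_isClique_row L ⟨0, hn⟩).card_le_chromaticNumber

/-- If a Latin square of order `n ≥ 1` contains `n - 1` pairwise disjoint transversals,
then `χ(L) = n`. -/
theorem stmt_6 (n : ℕ) (hn : 1 ≤ n) (L : Fin n → Fin n → Fin n)
    (hrow : ∀ r, Function.Bijective (L r))
    (hcol : ∀ c, Function.Bijective fun r => L r c)
    (T : Fin (n - 1) → Finset (Fin n × Fin n))
    (hindep : ∀ i, ∀ p ∈ T i, ∀ q ∈ T i, ¬ (latinGraph n L).Adj p q)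
    (hcard : ∀ i, (T i).card = n)
    (hdisj : ∀ i j, i ≠ j → Disjoint (T i) (T j)) :
    (latinGraph n L).chromaticNumber = (n : ℕ∞) :=
  stmt_6_general n hn L hrow T hindep hcard hdisj
end

section
/- If L is a row-complete Latin square of order n, then χ(L) ≤ 2n. -/
/-!
Colour a cell by the symbol of its right neighbour, and a cell of the last column by its row
(with a second palette of `n` colours). Two cells sharing a row or a column get different
right-neighbour symbols because rows and columns are injective, and two cells sharing a symbol
get different ones because the pairs of horizontally adjacent symbols are distinct.
-/

def rightNeighbourColor {n : ℕ} (L : Fin n → Fin n → Fin n) (x : Fin n × Fin n) :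
    Fin n ⊕ Fin n :=
  if h : (x.2 : ℕ) + 1 < n then .inl (L x.1 ⟨x.2 + 1, h⟩) else .inr x.1

def IsRowComplete (n : ℕ) (L : Fin n → Fin n → Fin n) : Prop :=
  ∀ (i i' : Fin n) (j j' : ℕ) (hj : j + 1 < n) (hj' : j' + 1 < n),
    L i ⟨j, Nat.lt_of_succ_lt hj⟩ = L i' ⟨j', Nat.lt_of_succ_lt hj'⟩ →
    L i ⟨j + 1, hj⟩ = L i' ⟨j' + 1, hj'⟩ →
    i = i' ∧ j = j'

namespace IsRowComplete

variable {n : ℕ} {L : Fin n → Fin n → Fin n}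

theorem eq_of_adj_of_rightNeighbour_eq (hrow : ∀ r, Function.Injective (L r))
    (hcol : ∀ c, Function.Injective fun r => L r c) (hrc : IsRowComplete n L)
    {x y : Fin n × Fin n} (hx : (x.2 : ℕ) + 1 < n) (hy : (y.2 : ℕ) + 1 < n)
    (hadj : x.1 = y.1 ∨ x.2 = y.2 ∨ L x.1 x.2 = L y.1 y.2)
    (hL : L x.1 ⟨x.2 + 1, hx⟩ = L y.1 ⟨y.2 + 1, hy⟩) : x = y := by
  obtain ⟨i, j⟩ := x
  obtain ⟨i', j'⟩ := y
  rcases hadj with rfl | rfl | hsym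
  · exact Prod.ext rfl (Fin.ext (by simpa using congrArg Fin.val (hrow i hL)))
  · exact Prod.ext (hcol _ hL) rfl
  · obtain ⟨rfl, hj⟩ := hrc i i' j j' hx hy hsym hL
    exact Prod.ext rfl (Fin.ext hj)

def latinGraphColoring (hrow : ∀ r, Function.Injective (L r))
    (hcol : ∀ c, Function.Injective fun r => L r c) (hrc : IsRowComplete n L) :
    (latinGraph n L).Coloring (Fin n ⊕ Fin n) :=
  .mk (rightNeighbourColor L) <| by
    rintro ⟨i, j⟩ ⟨i', j'⟩ ⟨hne, hadj⟩ heq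
    unfold rightNeighbourColor at heq
    split_ifs at heq with hx hy hy
    · exact hne (eq_of_adj_of_rightNeighbour_eq hrow hcol hrc hx hy hadj (Sum.inl_injective heq))
    · exact hne (Prod.ext (Sum.inr_injective heq) (Fin.ext (by omega)))

end IsRowComplete

/-- If `L` is a row-complete Latin square of order `n`, then `χ(L) ≤ 2n`. -/
theorem stmt_7 (n : ℕ) (L : Fin n → Fin n → Fin n)
    (hrow : ∀ r, Function.Bijective (L r))
    (hcol : ∀ c, Function.Bijective fun r => L r c)
    (hrc : ∀ (i i' : Fin n) (j j' : ℕ) (hj : j + 1 < n) (hj' : j' + 1 < n),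
      L i ⟨j, Nat.lt_of_succ_lt hj⟩ = L i' ⟨j', Nat.lt_of_succ_lt hj'⟩ →
      L i ⟨j + 1, hj⟩ = L i' ⟨j' + 1, hj'⟩ →
      i = i' ∧ j = j') :
    (latinGraph n L).chromaticNumber ≤ ((2 * n : ℕ) : ℕ∞) := by
  have hcolorable := (IsRowComplete.latinGraphColoring (fun r => (hrow r).injective)
    (fun c => (hcol c).injective) hrc).colorable
  rw [Fintype.card_sum, Fintype.card_fin, ← two_mul] at hcolorable
  exact hcolorable.chromaticNumber_le
end

section
/- For every finite group G of odd order n, the Cayley table of G satisfies χ(L_G) = n. -/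
/-!
Every row of the Cayley table is a clique of size `n`, so `χ(L_G) ≥ n`. Conversely, when
squaring is injective (as in a group of odd order) the colour `g * h ^ 2` of the cell `(g, h)`
is a proper `n`-colouring: along a row it determines `h ^ 2`, hence `h`; along a column it
determines `g`; and among the cells with symbol `s = g * h` it equals `s * h`, which determines `h`.
-/

/-- The Latin square graph of the Cayley table of a group `G`: vertices are cells `(g, h)`,
and two distinct cells are adjacent iff they share a row, a column, or a symbol `g * h`. -/
def cayleyGraph (G : Type*) [Group G] : SimpleGraph (G × G) where
  Adj x y := x ≠ y ∧ (x.1 = y.1 ∨ x.2 = y.2 ∨ x.1 * x.2 = y.1 * y.2)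
  symm := by
    constructor
    rintro x y ⟨hne, h⟩
    refine ⟨hne.symm, ?_⟩
    rcases h with h | h | h
    · exact Or.inl h.symm
    · exact Or.inr (Or.inl h.symm)
    · exact Or.inr (Or.inr h.symm)
  loopless := by constructor; rintro x ⟨hne, -⟩; exact hne rfl

open SimpleGraph Function

namespace cayleyGraph

variable {G : Type*} [Group G]

def rowEmbedding (g : G) : (⊤ : SimpleGraph G) ↪g cayleyGraph G where
  toFun h := (g, h)
  inj' _ _ hh := congrArg Prod.snd hh
  map_rel_iff' :=
    ⟨fun hadj hh => hadj.1 (congrArg (g, ·) hh),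
      fun hne => ⟨fun hh => hne (congrArg Prod.snd hh), Or.inl rfl⟩⟩

theorem card_le_chromaticNumber [Fintype G] :
    (Fintype.card G : ℕ∞) ≤ (cayleyGraph G).chromaticNumber :=
  chromaticNumber_top (V := G) ▸ chromaticNumber_mono_of_hom (rowEmbedding 1).toHom

def coloringOfSqInjective (hsq : Injective fun x : G => x ^ 2) : (cayleyGraph G).Coloring G :=
  Coloring.mk (fun x => x.1 * x.2 ^ 2) <| by
    rintro ⟨g, h⟩ ⟨g', h'⟩ ⟨hne, hrow | hcol | hsym⟩ (hc : g * h ^ 2 = g' * h' ^ 2)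
    · obtain rfl : g = g' := hrow
      exact hne (by rw [hsq (mul_left_cancel hc)])
    · obtain rfl : h = h' := hcol
      exact hne (by rw [mul_right_cancel hc])
    · change g * h = g' * h' at hsym
      rw [pow_two, pow_two, ← mul_assoc, ← mul_assoc, hsym] at hc
      obtain rfl := mul_left_cancel hc
      exact hne (by rw [mul_right_cancel hsym])

theorem chromaticNumber_le_card_of_sq_injective [Fintype G]
    (hsq : Injective fun x : G => x ^ 2) :
    (cayleyGraph G).chromaticNumber ≤ Fintype.card G :=
  (coloringOfSqInjective hsq).colorable.chromaticNumber_le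

end cayleyGraph

/-- For every finite group `G` of odd order `n`, the Cayley table satisfies `χ(L_G) = n`. -/
theorem stmt_10 (G : Type) [Group G] [Fintype G] (hodd : Odd (Fintype.card G)) :
    (cayleyGraph G).chromaticNumber = (Fintype.card G : ℕ∞) := by
  have hsq : Injective fun x : G => x ^ 2 :=
    (Nat.card_eq_fintype_card (α := G) ▸ hodd).coprime_two_right.pow_left_bijective.injective
  exact le_antisymm (cayleyGraph.chromaticNumber_le_card_of_sq_injective hsq)
    cayleyGraph.card_le_chromaticNumber
end

section
/- For every finite group G of order n, either χ(L_G) = n or χ(L_G) ≥ n + 2; that is, χ(L_G) ≠ n + 1. -/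
/-!
A row of the Cayley table is a clique, so `χ(L_G) ≥ n`. An independent set of `Γ(L_G)` is a
partial transversal, so a colour class has at most `n` cells, and a colouring with `n + 1`
colours of the `n²` cells has a class of exactly `n` cells: a transversal `{(g, σ g)}`, where
`σ` is a complete mapping. The right translates `{(g, σ g * c)}` of that transversal are again
transversals and partition the table into `n` colour classes. Hence `χ(L_G) ≠ n + 1`.
-/

open Function Finset SimpleGraph

variable {G : Type*} [Group G]

def IsCompleteMapping (σ : G → G) : Prop :=
  Injective σ ∧ Injective fun g => g * σ g

theorem card_le_chromaticNumber_cayleyGraph [Fintype G] :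
    (Fintype.card G : ℕ∞) ≤ (cayleyGraph G).chromaticNumber :=
  le_chromaticNumber_of_pairwise_adj (Nat.card_eq_fintype_card (α := G)).ge (fun h => (1, h))
    fun _ _ hne => ⟨fun h => hne (Prod.ext_iff.1 h).2, Or.inl rfl⟩

theorem isIndepSet_cayleyGraph_iff {s : Set (G × G)} :
    (cayleyGraph G).IsIndepSet s ↔
      s.InjOn Prod.fst ∧ s.InjOn Prod.snd ∧ s.InjOn fun x => x.1 * x.2 := by
  refine ⟨fun hs => ⟨?_, ?_, ?_⟩, fun ⟨h₁, h₂, h₃⟩ x hx y hy hne hadj => ?_⟩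
  · exact fun x hx y hy h => by_contra fun hne => hs hx hy hne ⟨hne, Or.inl h⟩
  · exact fun x hx y hy h => by_contra fun hne => hs hx hy hne ⟨hne, Or.inr (Or.inl h)⟩
  · exact fun x hx y hy h => by_contra fun hne => hs hx hy hne ⟨hne, Or.inr (Or.inr h)⟩
  · rcases hadj.2 with h | h | h
    exacts [hne (h₁ hx hy h), hne (h₂ hx hy h), hne (h₃ hx hy h)]

theorem IsCompleteMapping.colorable [Fintype G] {σ : G → G} (hσ : IsCompleteMapping σ) :
    (cayleyGraph G).Colorable (Fintype.card G) := by
  refine (Coloring.mk (fun x : G × G => (σ x.1)⁻¹ * x.2) ?_).colorable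
  rintro ⟨a, b⟩ ⟨a', b'⟩ ⟨hne, hadj⟩ hc
  set c := (σ a')⁻¹ * b'
  have hb : b = σ a * c := eq_mul_of_inv_mul_eq hc
  have hb' : b' = σ a' * c := (mul_inv_cancel_left _ _).symm
  suffices a = a' by subst this; exact hne (by rw [hb, hb'])
  rcases hadj with h | h | h
  · exact h
  · exact hσ.1 (mul_right_cancel (hb.symm.trans (h.trans hb')))
  · simp only [hb, hb', ← mul_assoc, mul_left_inj] at h
    exact hσ.2 h

theorem exists_isCompleteMapping_of_isIndepSet [Fintype G] {s : Finset (G × G)}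
    (hs : (cayleyGraph G).IsIndepSet (s : Set (G × G))) (hcard : Fintype.card G ≤ #s) :
    ∃ σ : G → G, IsCompleteMapping σ := by
  obtain ⟨h₁, h₂, h₃⟩ := isIndepSet_cayleyGraph_iff.1 hs
  have hsurj : Set.SurjOn Prod.fst (s : Set (G × G)) (univ : Finset G) :=
    surjOn_of_injOn_of_card_le _ (fun x _ => mem_coe.2 (mem_univ x.1)) h₁ hcard
  choose f hfs hf using fun g => hsurj (mem_coe.2 (mem_univ g))
  have hf_inj {a b : G} (h : f a = f b) : a = b := by rw [← hf a, ← hf b, h]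
  refine ⟨fun g => (f g).2, fun a b h => hf_inj (h₂ (hfs a) (hfs b) h), fun a b h => ?_⟩
  refine hf_inj (h₃ (hfs a) (hfs b) ?_)
  simpa only [hf] using h

theorem colorable_card_of_colorable_card_add_one [Fintype G]
    (h : (cayleyGraph G).Colorable (Fintype.card G + 1)) :
    (cayleyGraph G).Colorable (Fintype.card G) := by
  classical
  obtain ⟨C⟩ := h
  have hcount : (Fintype.card G + 1) * (Fintype.card G - 1) < Fintype.card G * Fintype.card G := by
    obtain ⟨m, hm⟩ := Nat.exists_eq_add_one_of_ne_zero (Fintype.card_pos (α := G)).ne'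
    rw [hm, Nat.add_sub_cancel]
    nlinarith
  obtain ⟨i, hi⟩ : ∃ i, Fintype.card G - 1 < #{x | C x = i} :=
    Fintype.exists_lt_card_fiber_of_mul_lt_card C (by simpa using hcount)
  have hclass : (cayleyGraph G).IsIndepSet (({x | C x = i} : Finset (G × G)) : Set (G × G)) := by
    rw [coe_filter]
    simp only [mem_univ, true_and]
    exact C.isIndepSet_colorClass i
  obtain ⟨σ, hσ⟩ := exists_isCompleteMapping_of_isIndepSet hclass (by omega)
  exact hσ.colorable

/-- For every finite group `G` of order `n`, either `χ(L_G) = n` or `χ(L_G) ≥ n + 2`. -/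
theorem stmt_11 (G : Type) [Group G] [Fintype G] :
    (cayleyGraph G).chromaticNumber = (Fintype.card G : ℕ∞) ∨
      (Fintype.card G : ℕ∞) + 2 ≤ (cayleyGraph G).chromaticNumber := by
  by_cases h : (cayleyGraph G).Colorable (Fintype.card G + 1)
  · exact .inl <| le_antisymm
      (chromaticNumber_le_iff_colorable.2 (colorable_card_of_colorable_card_add_one h))
      card_le_chromaticNumber_cayleyGraph
  · right
    rw [← chromaticNumber_le_iff_colorable, not_le, Nat.cast_add, Nat.cast_one,
      ← ENat.add_one_le_iff (by simp), add_assoc, one_add_one_eq_two] at h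
    exact h
end

section
/- For every odd n ≥ 1, the circulant Latin square of order n satisfies χ(L_{Z_n}) = n. -/
/-! A row of the square is a clique of size `n`, so `χ ≥ n`. Conversely, colour the cell `(r, c)`
by `r - c`: two cells in the same row or column with the same colour coincide, and two cells with
the same symbol and the same colour satisfy `2 r = 2 r'`, so they coincide as soon as `2` is
invertible in `ZMod n`, i.e. when `n` is odd. -/

/-- The Latin square graph of the circulant Latin square of order `n` (the Cayley table of
`ZMod n`, with symbol `r + c` in cell `(r, c)`). -/
def circGraph (n : ℕ) : SimpleGraph (ZMod n × ZMod n) where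
  Adj x y := x ≠ y ∧ (x.1 = y.1 ∨ x.2 = y.2 ∨ x.1 + x.2 = y.1 + y.2)
  symm := by
    constructor
    rintro x y ⟨hne, h⟩
    refine ⟨hne.symm, ?_⟩
    rcases h with h | h | h
    · exact Or.inl h.symm
    · exact Or.inr (Or.inl h.symm)
    · exact Or.inr (Or.inr h.symm)
  loopless := by constructor; rintro x ⟨hne, -⟩; exact hne rfl

namespace circGraph

open SimpleGraph

variable {n : ℕ}

def rowHom (r : ZMod n) : (⊤ : SimpleGraph (ZMod n)) →g circGraph n where
  toFun c := (r, c)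
  map_rel' hne := ⟨fun h => hne (Prod.ext_iff.1 h).2, Or.inl rfl⟩

theorem natCast_le_chromaticNumber [NeZero n] : (n : ℕ∞) ≤ (circGraph n).chromaticNumber := by
  simpa [ZMod.card] using chromaticNumber_mono_of_hom (rowHom (0 : ZMod n))

def subColoring (h2 : IsUnit (2 : ZMod n)) : (circGraph n).Coloring (ZMod n) :=
  Coloring.mk (fun x => x.1 - x.2) <| by
    rintro x y ⟨hne, hrow | hcol | hsym⟩ hsub
    all_goals apply hne
    · exact Prod.ext hrow (by linear_combination hrow - hsub)
    · exact Prod.ext (by linear_combination hsub + hcol) hcol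
    · have hrow : x.1 = y.1 := h2.mul_left_cancel (by linear_combination hsym + hsub)
      exact Prod.ext hrow (by linear_combination hsym - hrow)

theorem colorable_of_isUnit_two [NeZero n] (h2 : IsUnit (2 : ZMod n)) :
    (circGraph n).Colorable n := by
  simpa [ZMod.card] using (subColoring h2).colorable

theorem chromaticNumber_eq_of_isUnit_two [NeZero n] (h2 : IsUnit (2 : ZMod n)) :
    (circGraph n).chromaticNumber = n :=
  (colorable_of_isUnit_two h2).chromaticNumber_le.antisymm natCast_le_chromaticNumber

end circGraph

theorem stmt_13_general (n : ℕ) (hodd : Odd n) :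
    (circGraph n).chromaticNumber = (n : ℕ∞) := by
  have : NeZero n := ⟨hodd.pos.ne'⟩
  have h2 : IsUnit (2 : ZMod n) := by
    simpa using (ZMod.isUnit_iff_coprime 2 n).mpr hodd.coprime_two_left
  exact circGraph.chromaticNumber_eq_of_isUnit_two h2

/-- For every odd `n ≥ 1`, the circulant Latin square of order `n` satisfies `χ = n`. -/
theorem stmt_13 (n : ℕ) (hn : 1 ≤ n) (hodd : Odd n) :
    (circGraph n).chromaticNumber = (n : ℕ∞) :=
  stmt_13_general n hodd
end

section
/- For every even n ≥ 2, the circulant Latin square of order n satisfies χ(L_{Z_n}) = n + 2. -/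
open Finset

theorem Nat.mod_eq_or_mod_add_eq_of_lt_two_mul {a N : ℕ} (h : a < 2 * N) :
    a % N = a ∨ a % N + N = a := by
  rcases lt_or_ge a N with ha | ha
  · exact Or.inl (Nat.mod_eq_of_lt ha)
  · right
    rw [Nat.mod_eq_sub_mod ha, Nat.mod_eq_of_lt (by omega)]
    omega

theorem ZMod.natCast_eq_natCast_cases_of_lt_two_mul {N a b : ℕ} (ha : a < 2 * N) (hb : b < 2 * N)
    (h : (a : ZMod N) = b) : a = b ∨ a = b + N ∨ b = a + N := by
  rw [ZMod.natCast_eq_natCast_iff'] at h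
  rcases Nat.mod_eq_or_mod_add_eq_of_lt_two_mul ha with ha' | ha' <;>
    rcases Nat.mod_eq_or_mod_add_eq_of_lt_two_mul hb with hb' | hb' <;> omega

theorem ZMod.val_add_cases {N : ℕ} [NeZero N] (a b : ZMod N) :
    (a + b).val = a.val + b.val ∨ (a + b).val + N = a.val + b.val := by
  rw [ZMod.val_add]
  exact Nat.mod_eq_or_mod_add_eq_of_lt_two_mul (by have := a.val_lt; have := b.val_lt; omega)

theorem ZMod.sum_univ_eq_sum_range (n : ℕ) [NeZero n] :
    ∑ z : ZMod n, z = ∑ i ∈ range n, (i : ZMod n) := by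
  obtain ⟨k, rfl⟩ : ∃ k, n = k + 1 := Nat.exists_eq_add_one.mpr (NeZero.pos n)
  rw [← Fin.sum_univ_eq_sum_range]
  exact Finset.sum_congr rfl fun i _ ↦ (ZMod.natCast_zmod_val (n := k + 1) i).symm

theorem ZMod.sum_univ_ne_zero_of_even {n : ℕ} [NeZero n] (hn : Even n) : ∑ z : ZMod n, z ≠ 0 := by
  obtain ⟨m, hm⟩ := hn
  obtain ⟨k, rfl⟩ : ∃ k, m = k + 1 := Nat.exists_eq_add_one.mpr (by have := NeZero.pos n; omega)
  have gauss : (∑ i ∈ range n, i) + (k + 1) = (k + 1) * n := by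
    have h := sum_range_id_mul_two n
    rw [hm, show k + 1 + (k + 1) - 1 = 2 * k + 1 by omega] at h
    rw [hm]; nlinarith
  rw [ZMod.sum_univ_eq_sum_range]
  intro h
  have h' := congrArg (Nat.cast : ℕ → ZMod n) gauss
  push_cast at h'
  rw [h, ZMod.natCast_self, zero_add, mul_zero, ← Nat.cast_succ, ZMod.natCast_eq_zero_iff] at h'
  exact absurd (Nat.le_of_dvd k.succ_pos h') (by omega)

theorem SimpleGraph.Colorable.card_le_mul {V : Type*} [Fintype V] {G : SimpleGraph V} {k a : ℕ}
    (hG : G.Colorable k) (ha : ∀ s : Finset V, G.IsIndepSet s → s.card ≤ a) :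
    Fintype.card V ≤ k * a := by
  obtain ⟨C⟩ := hG
  by_contra! hlt
  rw [← Fintype.card_fin k] at hlt
  obtain ⟨c, hc⟩ := Fintype.exists_lt_card_fiber_of_mul_lt_card C hlt
  refine (ha _ fun x hx y hy _ ↦ ?_).not_gt hc
  simp only [mem_coe, mem_filter, mem_univ, true_and] at hx hy
  exact C.not_adj_of_mem_colorClass hx hy

theorem Finset.sum_eq_sum_univ_of_injOn {α β : Type*} [Fintype β] [AddCommMonoid β]
    {s : Finset α} {f : α → β} (hf : Set.InjOn f s) (hs : s.card = Fintype.card β) :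
    ∑ x ∈ s, f x = ∑ b, b := by
  classical
  have himage : s.image f = univ := eq_univ_of_card _ (by rw [card_image_of_injOn hf, hs])
  rw [← himage, sum_image hf]

def skipHalf (n k : ℕ) : ℕ := k + if n ≤ 2 * k then 1 else 0

theorem skipHalf_injective (n : ℕ) : Function.Injective (skipHalf n) := by
  intro a b h
  unfold skipHalf at h
  split_ifs at h <;> omega

theorem skipHalf_le {n k : ℕ} (hk : k < n) : skipHalf n k ≤ n := by
  unfold skipHalf
  split_ifs <;> omega

namespace CircGraph

variable {n : ℕ}

theorem injOn_of_isIndepSet {s : Set (ZMod n × ZMod n)} (hs : (circGraph n).IsIndepSet s) :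
    s.InjOn Prod.fst ∧ s.InjOn Prod.snd ∧ s.InjOn (fun x ↦ x.1 + x.2) := by
  refine ⟨?_, ?_, ?_⟩ <;> intro x hx y hy hxy <;> by_contra hne <;>
    exact hs hx hy hne ⟨hne, by tauto⟩

variable [NeZero n]

theorem card_lt_of_isIndepSet (heven : Even n) {s : Finset (ZMod n × ZMod n)}
    (hs : (circGraph n).IsIndepSet s) : s.card < n := by
  obtain ⟨hfst, hsnd, hadd⟩ := injOn_of_isIndepSet hs
  have hle : s.card ≤ n := by
    simpa using card_le_card_of_injOn Prod.fst (fun _ _ ↦ mem_coe.2 (mem_univ _)) hfst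
  refine hle.lt_of_ne fun hsn ↦ ZMod.sum_univ_ne_zero_of_even heven ?_
  have hcard : s.card = Fintype.card (ZMod n) := by rw [hsn, ZMod.card]
  have hsum := sum_eq_sum_univ_of_injOn hadd hcard
  rw [sum_add_distrib, sum_eq_sum_univ_of_injOn hfst hcard,
    sum_eq_sum_univ_of_injOn hsnd hcard, add_eq_right] at hsum
  exact hsum

theorem not_colorable (heven : Even n) : ¬ (circGraph n).Colorable (n + 1) := by
  intro h
  have := h.card_le_mul (a := n - 1) fun s hs ↦
    Nat.le_sub_one_of_lt (card_lt_of_isIndepSet heven hs)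
  simp only [Fintype.card_prod, ZMod.card] at this
  obtain ⟨k, rfl⟩ : ∃ k, n = k + 1 := Nat.exists_eq_add_one.mpr (NeZero.pos n)
  simp only [Nat.add_sub_cancel] at this
  nlinarith

def colorIndex (x : ZMod n × ZMod n) : ℕ := (x.1 + x.2).val + skipHalf n x.2.val

def coloring (x : ZMod n × ZMod n) : ZMod (n + 2) := colorIndex x

theorem colorIndex_lt (x : ZMod n × ZMod n) : colorIndex x < 2 * n + 1 := by
  have := (x.1 + x.2).val_lt
  have := skipHalf_le x.2.val_lt
  unfold colorIndex
  omega

theorem colorIndex_cases_of_coloring_eq {x y : ZMod n × ZMod n} (h : coloring x = coloring y) :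
    colorIndex x = colorIndex y ∨ colorIndex x = colorIndex y + (n + 2) ∨
      colorIndex y = colorIndex x + (n + 2) :=
  ZMod.natCast_eq_natCast_cases_of_lt_two_mul
    (by grind [colorIndex_lt]) (by grind [colorIndex_lt]) h

theorem fst_eq_of_coloring_eq {r s c : ZMod n} (h : coloring (r, c) = coloring (s, c)) :
    r = s := by
  have := (r + c).val_lt
  have := (s + c).val_lt
  have hadd : r + c = s + c := by
    apply ZMod.val_injective
    rcases colorIndex_cases_of_coloring_eq h with h | h | h <;> simp only [colorIndex] at h <;>
      omega
  exact add_right_cancel hadd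

theorem snd_eq_of_coloring_eq_of_add_eq {x y : ZMod n × ZMod n} (h : coloring x = coloring y)
    (hadd : x.1 + x.2 = y.1 + y.2) : x.2 = y.2 := by
  have := skipHalf_le x.2.val_lt
  have := skipHalf_le y.2.val_lt
  refine ZMod.val_injective n (skipHalf_injective n ?_)
  rcases colorIndex_cases_of_coloring_eq h with h | h | h <;> simp only [colorIndex, hadd] at h <;>
    omega

theorem snd_eq_of_coloring_eq (heven : Even n) {r c d : ZMod n}
    (h : coloring (r, c) = coloring (r, d)) : c = d := by
  obtain ⟨m, hm⟩ := heven
  have := r.val_lt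
  have := c.val_lt
  have := d.val_lt
  have := (r + c).val_lt
  have := (r + d).val_lt
  apply ZMod.val_injective
  rcases colorIndex_cases_of_coloring_eq h with h | h | h <;>
    rcases ZMod.val_add_cases r c with hc | hc <;>
    rcases ZMod.val_add_cases r d with hd | hd <;>
    simp only [colorIndex, skipHalf] at h <;> split_ifs at h <;> omega

theorem colorable (heven : Even n) : (circGraph n).Colorable (n + 2) := by
  let C : (circGraph n).Coloring (ZMod (n + 2)) := .mk coloring <| by
    rintro ⟨r, c⟩ ⟨s, d⟩ ⟨hne, hline⟩ h
    dsimp only at hline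
    refine hne ?_
    rcases hline with rfl | rfl | hadd
    · rw [snd_eq_of_coloring_eq heven h]
    · rw [fst_eq_of_coloring_eq h]
    · obtain rfl := snd_eq_of_coloring_eq_of_add_eq h hadd
      rw [add_right_cancel hadd]
  simpa using C.colorable

end CircGraph

/-- For every even `n ≥ 2`, the circulant Latin square of order `n` satisfies `χ = n + 2`. -/
theorem stmt_14 (n : ℕ) (hn : 2 ≤ n) (heven : Even n) :
    (circGraph n).chromaticNumber = ((n + 2 : ℕ) : ℕ∞) := by
  have : NeZero n := ⟨by omega⟩
  rw [Nat.cast_add_one, SimpleGraph.chromaticNumber_eq_iff_colorable_not_colorable]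
  exact ⟨CircGraph.colorable heven, CircGraph.not_colorable heven⟩
end

section
/- Let n ≥ 2 and let M be the Möbius ladder of order 2n. If x and x' are nearly antipodal vertices of M (i.e. x' = x + (n−1) in ZMod (2n)), then the subgraph of M induced on the complement of {x, x'} is bipartite. -/
/-! Put `x` at position `0`. Colour position `k` of the rim by the parity of `k` on the first
half `k < n` and by the parity of `k - n + 1` on the second half. Rim edges inside either half
and every rung `k ↔ k + n` then join different colours; the two rim edges joining the halves,
`n - 1 ↔ n` and `2n - 1 ↔ 0`, are exactly those lost with the deleted vertices `0` and `n - 1`. -/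

def mobiusLadder (n : ℕ) : SimpleGraph (ZMod (2 * n)) where
  Adj x y := x ≠ y ∧ (y - x = 1 ∨ y - x = -1 ∨ y - x = (n : ZMod (2 * n)))
  symm := by
    have hn : (n : ZMod (2 * n)) + (n : ZMod (2 * n)) = 0 := by
      have h := ZMod.natCast_self (2 * n)
      push_cast at h
      linear_combination h
    refine ⟨?_⟩
    rintro x y ⟨hne, h⟩
    refine ⟨hne.symm, ?_⟩
    have hsub : x - y = -(y - x) := by ring
    rcases h with h | h | h
    · exact Or.inr (Or.inl (by rw [hsub, h]))
    · exact Or.inl (by rw [hsub, h, neg_neg])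
    · exact Or.inr (Or.inr (by rw [hsub, h, neg_eq_of_add_eq_zero_left hn]))
  loopless := by refine ⟨?_⟩; rintro x ⟨hne, -⟩; exact hne rfl

theorem ZMod.val_add_eq_or {m : ℕ} [NeZero m] (a b : ZMod m) :
    (a + b).val = a.val + b.val ∨ a.val + b.val = (a + b).val + m := by
  rcases lt_or_ge (a.val + b.val) m with h | h
  · exact .inl (ZMod.val_add_of_lt h)
  · exact .inr (ZMod.val_add_val_of_le h)

def ladderColor (n k : ℕ) : Fin 2 :=
  ⟨if k < n then k % 2 else (k - n + 1) % 2, by split_ifs <;> omega⟩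

theorem ladderColor_ne {n a b : ℕ} (ha : a ≠ 0 ∧ a ≠ n - 1) (hb : b ≠ 0 ∧ b ≠ n - 1)
    (ha2n : a < 2 * n) (hb2n : b < 2 * n) (hab : b = a + 1 ∨ b = a + n ∨ a = b + n) :
    ladderColor n a ≠ ladderColor n b := by
  simp only [ladderColor, ne_eq, Fin.mk.injEq]
  split_ifs <;> omega

namespace mobiusLadder

variable {n : ℕ}

theorem adj_sub_right {u v x : ZMod (2 * n)} :
    (mobiusLadder n).Adj (u - x) (v - x) ↔ (mobiusLadder n).Adj u v := by
  simp only [mobiusLadder, sub_sub_sub_cancel_right, ne_eq, sub_left_inj]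

theorem ladderColor_val_ne [NeZero n] {a b : ZMod (2 * n)}
    (ha : a ∉ ({0, ((n - 1 : ℕ) : ZMod (2 * n))} : Set (ZMod (2 * n))))
    (hb : b ∉ ({0, ((n - 1 : ℕ) : ZMod (2 * n))} : Set (ZMod (2 * n))))
    (hab : b = a + 1 ∨ b = a + n) :
    ladderColor n a.val ≠ ladderColor n b.val := by
  have hn : 0 < n := Nat.pos_of_neZero n
  have avoids {c : ZMod (2 * n)} (hc : c ∉ ({0, ((n - 1 : ℕ) : ZMod (2 * n))} : Set _)) :
      c.val ≠ 0 ∧ c.val ≠ n - 1 := by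
    simp only [Set.mem_insert_iff, Set.mem_singleton_iff, not_or] at hc
    refine ⟨fun h => hc.1 ((ZMod.val_eq_zero c).1 h), fun h => hc.2 ?_⟩
    rw [← ZMod.natCast_zmod_val c, h]
  have ha2n := ZMod.val_lt a
  have hb0 := (avoids hb).1
  refine ladderColor_ne (avoids ha) (avoids hb) ha2n (ZMod.val_lt b) ?_
  rcases hab with rfl | rfl
  · have h1 : (1 : ZMod (2 * n)).val = 1 := ZMod.val_one'' (by omega)
    rcases ZMod.val_add_eq_or a 1 with h | h <;> omega
  · have hn' : (n : ZMod (2 * n)).val = n := ZMod.val_natCast_of_lt (by omega)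
    rcases ZMod.val_add_eq_or a n with h | h <;> omega

theorem ladderColor_val_ne_of_adj [NeZero n] {a b : ZMod (2 * n)}
    (ha : a ∉ ({0, ((n - 1 : ℕ) : ZMod (2 * n))} : Set (ZMod (2 * n))))
    (hb : b ∉ ({0, ((n - 1 : ℕ) : ZMod (2 * n))} : Set (ZMod (2 * n))))
    (hab : (mobiusLadder n).Adj a b) :
    ladderColor n a.val ≠ ladderColor n b.val := by
  rcases hab.2 with h | h | h
  · exact ladderColor_val_ne ha hb (.inl (sub_eq_iff_eq_add'.1 h))
  · refine (ladderColor_val_ne hb ha (.inl ?_)).symm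
    linear_combination -h
  · exact ladderColor_val_ne ha hb (.inr (sub_eq_iff_eq_add'.1 h))

end mobiusLadder

/-- Deleting a nearly antipodal pair of vertices from a Möbius ladder leaves a bipartite
graph (here: a `2`-colorable induced subgraph). -/
theorem stmt_15 (n : ℕ) (hn : 2 ≤ n) (x x' : ZMod (2 * n))
    (hx : x' = x + ((n - 1 : ℕ) : ZMod (2 * n))) :
    ((mobiusLadder n).induce ({x, x'}ᶜ : Set (ZMod (2 * n)))).Colorable 2 := by
  have : NeZero n := ⟨by omega⟩
  have shift {v : ZMod (2 * n)} (hv : v ∈ ({x, x'}ᶜ : Set (ZMod (2 * n)))) :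
      v - x ∉ ({0, ((n - 1 : ℕ) : ZMod (2 * n))} : Set (ZMod (2 * n))) := by
    subst hx
    simpa [sub_eq_zero, sub_eq_iff_eq_add'] using hv
  refine ⟨.mk (fun v => ladderColor n (v.1 - x).val) ?_⟩
  rintro ⟨u, hu⟩ ⟨v, hv⟩ huv
  exact mobiusLadder.ladderColor_val_ne_of_adj (shift hu) (shift hv)
    (mobiusLadder.adj_sub_right.2 huv)
end
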